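/- For the Ky Fan inequality applied to diagonal extraction: for any n×n matrix M and any 1 ≤ k ≤ n, the sum of the k largest singular values of the diagonal part M_d is at most the sum of the k largest singular values of M. -/

import Mathlib

/-!
Write `M = U Σ Vᵀ`, `Σ = diagonal σ`, with `U`, `V` partial isometries. Then
`|M i i| ≤ ∑ j, σ j |U i j| |V i j|`, and for `#S = k` the weights `c j = ∑ i ∈ S, |U i j| |V i j|`
lie in `[0, 1]` (Cauchy–Schwarz on columns) and sum to at most `k` (Cauchy–Schwarz on rows).
A linear functional with such weights is dominated by the sum of the `k` largest `σ j`, so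
`∑ i ∈ S, |M i i| ≤ σ₁ + ⋯ + σₖ`. For the diagonal part `D = M_d` the same estimate runs the
other way: `Σ_D = Uᵀ D V` for the decomposition of `D`, so any `k` singular values of `D` are
bounded by some `k` of the `|M i i|`, which by the first part are bounded by the `k` largest
singular values of `M`.
-/

open scoped BigOperators

/-- Singular values of a real square matrix: square roots of the eigenvalues
of `Mᵀ * M`. -/
noncomputable def singVals {n : ℕ} (M : Matrix (Fin n) (Fin n) ℝ) : Fin n → ℝ :=
  fun i => Real.sqrt ((show (M.transpose * M).IsHermitian by
    simpa [Matrix.conjTranspose_eq_transpose_of_trivial] using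
      Matrix.isHermitian_conjTranspose_mul_self M).eigenvalues i)

/-- The sum of the `k` largest singular values of `M`, expressed as the supremum of
sums of singular values over index sets of cardinality `k`. -/
noncomputable def sumTopSingVals {n : ℕ} (M : Matrix (Fin n) (Fin n) ℝ) (k : ℕ) : ℝ :=
  sSup {x : ℝ | ∃ s : Finset (Fin n), s.card = k ∧ x = ∑ i ∈ s, singVals M i}

open Finset Matrix

section Rearrangement

variable {ι : Type*} [Fintype ι] [DecidableEq ι]

theorem exists_card_eq_forall_le_of_mem_of_notMem (f : ι → ℝ) {k : ℕ}
    (hk : k ≤ Fintype.card ι) :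
    ∃ T : Finset ι, T.card = k ∧ ∀ i ∈ T, ∀ j ∉ T, f j ≤ f i := by
  obtain ⟨T, hT, hmax⟩ := (powersetCard k univ).exists_max_image (fun T => ∑ i ∈ T, f i)
    (powersetCard_nonempty.2 (by simpa using hk))
  rw [mem_powersetCard] at hT
  refine ⟨T, hT.2, fun i hi j hj => ?_⟩
  -- otherwise exchanging `i` for `j` would give a `k`-set with a larger sum
  by_contra! hlt
  have hswap : insert j (T.erase i) ∈ powersetCard k univ := by
    rw [mem_powersetCard, card_insert_of_notMem (by simp [hj]), card_erase_of_mem hi,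
      ← hT.2, Nat.sub_add_cancel (card_pos.2 ⟨i, hi⟩)]
    exact ⟨subset_univ _, rfl⟩
  have hsum := hmax _ hswap
  rw [sum_insert (by simp [hj]), sum_erase_eq_sub hi] at hsum
  linarith

theorem exists_card_eq_sum_mul_le_sum {σ c : ι → ℝ} {k : ℕ} (hk : k ≤ Fintype.card ι)
    (hσ : ∀ j, 0 ≤ σ j) (hc₀ : ∀ j, 0 ≤ c j) (hc₁ : ∀ j, c j ≤ 1) (hck : ∑ j, c j ≤ k) :
    ∃ T : Finset ι, T.card = k ∧ ∑ j, σ j * c j ≤ ∑ j ∈ T, σ j := by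
  obtain ⟨T, hTk, hT⟩ := exists_card_eq_forall_le_of_mem_of_notMem σ hk
  obtain ⟨t, ht₀, hle, hge⟩ : ∃ t, 0 ≤ t ∧ (∀ j ∉ T, σ j ≤ t) ∧ ∀ i ∈ T, t ≤ σ i := by
    rcases (Tᶜ).eq_empty_or_nonempty with h | ⟨j₀, hj₀⟩
    · exact ⟨0, le_rfl, fun j hj => absurd (mem_compl.2 hj) (h ▸ notMem_empty j), fun i _ => hσ i⟩
    · exact ⟨Tᶜ.sup' ⟨j₀, hj₀⟩ σ, le_sup'_of_le σ hj₀ (hσ j₀),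
        fun j hj => le_sup' σ (mem_compl.2 hj),
        fun i hi => sup'_le _ _ fun j hj => hT i hi j (mem_compl.1 hj)⟩
  refine ⟨T, hTk, ?_⟩
  have hrest : ∑ j ∈ Tᶜ, c j ≤ ∑ i ∈ T, (1 - c i) := by
    have hsplit := sum_add_sum_compl T c
    rw [sum_sub_distrib, sum_const, hTk, nsmul_one]
    linarith
  calc ∑ j, σ j * c j = ∑ i ∈ T, σ i * c i + ∑ j ∈ Tᶜ, σ j * c j :=
        (sum_add_sum_compl T _).symm
    _ ≤ ∑ i ∈ T, σ i * c i + t * ∑ j ∈ Tᶜ, c j := by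
      rw [mul_sum]
      gcongr with j hj
      · exact hc₀ j
      · exact hle j (mem_compl.1 hj)
    _ ≤ ∑ i ∈ T, σ i * c i + t * ∑ i ∈ T, (1 - c i) :=
      add_le_add_right (mul_le_mul_of_nonneg_left hrest ht₀) _
    _ ≤ ∑ i ∈ T, σ i * c i + ∑ i ∈ T, σ i * (1 - c i) := by
      rw [mul_sum]
      gcongr with i hi
      · linarith [hc₁ i]
      · exact hge i hi
    _ = ∑ i ∈ T, σ i := by
      rw [← sum_add_distrib]
      simp only [← mul_add, add_sub_cancel, mul_one]

end Rearrangement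

theorem sum_abs_mul_abs_le_one {ι : Type*} [Fintype ι] {f g : ι → ℝ} (hf : ∑ i, f i ^ 2 ≤ 1)
    (hg : ∑ i, g i ^ 2 ≤ 1) (s : Finset ι) : ∑ i ∈ s, |f i| * |g i| ≤ 1 :=
  calc ∑ i ∈ s, |f i| * |g i| ≤ ∑ i, |f i| * |g i| :=
        sum_le_univ_sum_of_nonneg fun i => by positivity
    _ ≤ ∑ i, (f i ^ 2 + g i ^ 2) / 2 := by
      gcongr with i
      nlinarith [two_mul_le_add_sq |f i| |g i|, sq_abs (f i), sq_abs (g i)]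
    _ ≤ 1 := by
      rw [← sum_div, sum_add_distrib]
      linarith

namespace Matrix

theorem IsSymm.apply_self_le_one {n : Type*} [Fintype n] {P : Matrix n n ℝ} (hP : P.IsSymm)
    (hPP : IsIdempotentElem P) (i : n) : P i i ≤ 1 := by
  have h : P i i ^ 2 ≤ P i i :=
    calc P i i ^ 2 ≤ ∑ j, P i j ^ 2 := single_le_sum (fun j _ => sq_nonneg (P i j)) (mem_univ i)
      _ = P i i := by
        conv_rhs => rw [← hPP.eq, mul_apply]
        exact sum_congr rfl fun j _ => by rw [sq, hP.apply i j]
  nlinarith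

def IsPartialIsometry {m n : Type*} [Fintype m] [Fintype n] (U : Matrix m n ℝ) : Prop :=
  U * Uᵀ * U = U

namespace IsPartialIsometry

variable {m n : Type*} [Fintype m] [Fintype n] {U : Matrix m n ℝ}

protected theorem eq (hU : U.IsPartialIsometry) : U * Uᵀ * U = U := hU

theorem transpose (hU : U.IsPartialIsometry) : Uᵀ.IsPartialIsometry := by
  simpa [IsPartialIsometry, transpose_mul, Matrix.mul_assoc] using congrArg Matrix.transpose hU.eq

theorem sum_sq_row_le_one (hU : U.IsPartialIsometry) (i : m) : ∑ j, U i j ^ 2 ≤ 1 := by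
  have hsymm : (U * Uᵀ).IsSymm := by simp [Matrix.IsSymm, transpose_mul]
  have hidem : IsIdempotentElem (U * Uᵀ) := by
    rw [IsIdempotentElem, ← Matrix.mul_assoc, hU.eq]
  simpa [mul_apply, sq] using hsymm.apply_self_le_one hidem i

theorem sum_sq_col_le_one (hU : U.IsPartialIsometry) (j : n) : ∑ i, U i j ^ 2 ≤ 1 :=
  hU.transpose.sum_sq_row_le_one j

end IsPartialIsometry

theorem exists_isPartialIsometry_of_transpose_mul_self_eq_diagonal {m n : Type*}
    [Fintype m] [Fintype n] [DecidableEq n] {W : Matrix m n ℝ} {σ : n → ℝ}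
    (hW : Wᵀ * W = diagonal fun j => σ j ^ 2) :
    ∃ U : Matrix m n ℝ, U.IsPartialIsometry ∧ U * diagonal σ = W ∧ Uᵀ * W = diagonal σ := by
  have hzero : ∀ i j, σ j = 0 → W i j = 0 := by
    intro i j hj
    have hjj : ∑ l, W l j * W l j = 0 := by
      simpa [mul_apply, hj] using congrFun (congrFun hW j) j
    exact mul_self_eq_zero.1 <|
      congrFun ((Fintype.sum_eq_zero_iff_of_nonneg fun l => mul_self_nonneg _).1 hjj) i
  -- Since `0⁻¹ = 0`, `diagonal σ⁻¹` is the pseudo-inverse of `diagonal σ`.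
  refine ⟨W * diagonal σ⁻¹, ?_, ?_, ?_⟩
  · simp only [IsPartialIsometry, transpose_mul, diagonal_transpose, Matrix.mul_assoc,
      ← Matrix.mul_assoc Wᵀ, hW, diagonal_mul_diagonal]
    congr 2
    ext j
    simp only [Pi.inv_apply]
    by_cases hj : σ j = 0 <;> field_simp [hj]
  · ext i j
    by_cases hj : σ j = 0
    · simp [mul_diagonal, hj, hzero i j hj]
    · simp [mul_diagonal, hj]
  · rw [transpose_mul, diagonal_transpose, Matrix.mul_assoc, hW, diagonal_mul_diagonal]
    congr 1
    ext j
    simp only [Pi.inv_apply]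
    by_cases hj : σ j = 0 <;> field_simp [hj]

theorem isHermitian_transpose_mul_self {m n : Type*} [Fintype m] (M : Matrix m n ℝ) :
    (Mᵀ * M).IsHermitian := by
  simpa [conjTranspose_eq_transpose_of_trivial] using isHermitian_conjTranspose_mul_self M

theorem exists_svd {n : ℕ} (M : Matrix (Fin n) (Fin n) ℝ) :
    ∃ U V : Matrix (Fin n) (Fin n) ℝ, U.IsPartialIsometry ∧ V.IsPartialIsometry ∧
      M = U * diagonal (singVals M) * Vᵀ ∧ Uᵀ * M * V = diagonal (singVals M) := by
  have hA := isHermitian_transpose_mul_self M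
  have hVVt := Unitary.mul_star_self_of_mem hA.eigenvectorUnitary.2
  have hdiag := hA.conjStarAlgAut_star_eigenvectorUnitary
  simp only [Unitary.conjStarAlgAut_star_apply] at hdiag
  set V : Matrix (Fin n) (Fin n) ℝ := (hA.eigenvectorUnitary : Matrix (Fin n) (Fin n) ℝ)
  have hstar : star V = Vᵀ := by
    rw [star_eq_conjTranspose, conjTranspose_eq_transpose_of_trivial]
  rw [hstar] at hVVt hdiag
  have hMV : (M * V)ᵀ * (M * V) = diagonal fun j => singVals M j ^ 2 := by
    have hsq : (fun j => singVals M j ^ 2) = hA.eigenvalues :=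
      funext fun j => Real.sq_sqrt (eigenvalues_conjTranspose_mul_self_nonneg M j)
    rw [hsq]
    simpa [transpose_mul, Matrix.mul_assoc] using hdiag
  obtain ⟨U, hU, hUσ, hUM⟩ := exists_isPartialIsometry_of_transpose_mul_self_eq_diagonal hMV
  refine ⟨U, V, hU, by rw [IsPartialIsometry, hVVt, Matrix.one_mul], ?_, ?_⟩
  · rw [hUσ, Matrix.mul_assoc, hVVt, Matrix.mul_one]
  · rw [Matrix.mul_assoc, hUM]

theorem exists_card_eq_sum_abs_diag_le {ι : Type*} [Fintype ι] [DecidableEq ι]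
    {U V : Matrix ι ι ℝ} (hU : U.IsPartialIsometry) (hV : V.IsPartialIsometry) (w : ι → ℝ)
    (S : Finset ι) :
    ∃ T : Finset ι, T.card = S.card ∧
      ∑ i ∈ S, |(U * diagonal w * Vᵀ) i i| ≤ ∑ j ∈ T, |w j| := by
  set c : ι → ℝ := fun j => ∑ i ∈ S, |U i j| * |V i j|
  have hc₁ : ∀ j, c j ≤ 1 := fun j =>
    sum_abs_mul_abs_le_one (hU.sum_sq_col_le_one j) (hV.sum_sq_col_le_one j) S
  have hck : ∑ j, c j ≤ S.card :=
    calc ∑ j, c j = ∑ i ∈ S, ∑ j, |U i j| * |V i j| := sum_comm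
      _ ≤ ∑ i ∈ S, 1 := sum_le_sum fun i _ =>
          sum_abs_mul_abs_le_one (hU.sum_sq_row_le_one i) (hV.sum_sq_row_le_one i) univ
      _ = S.card := by simp
  obtain ⟨T, hT, hle⟩ := exists_card_eq_sum_mul_le_sum (σ := fun j => |w j|) (card_le_univ S)
    (fun j => abs_nonneg _) (fun j => sum_nonneg fun i _ => by positivity) hc₁ hck
  refine ⟨T, hT, le_trans ?_ hle⟩
  calc ∑ i ∈ S, |(U * diagonal w * Vᵀ) i i|
      ≤ ∑ i ∈ S, ∑ j, |w j| * (|U i j| * |V i j|) := by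
        gcongr with i
        simp only [mul_apply (M := U * diagonal w), mul_diagonal, transpose_apply]
        refine (abs_sum_le_sum_abs _ _).trans_eq (sum_congr rfl fun j _ => ?_)
        rw [abs_mul, abs_mul]
        ring
    _ = ∑ j, |w j| * c j := by
        rw [sum_comm]
        simp only [c, mul_sum]

end Matrix

theorem le_sumTopSingVals {n : ℕ} (M : Matrix (Fin n) (Fin n) ℝ) (T : Finset (Fin n)) :
    ∑ i ∈ T, singVals M i ≤ sumTopSingVals M T.card := by
  refine le_csSup (Set.Finite.bddAbove ?_) ⟨T, rfl, rfl⟩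
  refine (Set.finite_range fun s : Finset (Fin n) => ∑ i ∈ s, singVals M i).subset ?_
  rintro _ ⟨s, -, rfl⟩
  exact ⟨s, rfl⟩

theorem sum_abs_diag_le_sumTopSingVals {n : ℕ} (M : Matrix (Fin n) (Fin n) ℝ)
    (S : Finset (Fin n)) : ∑ i ∈ S, |M i i| ≤ sumTopSingVals M S.card := by
  obtain ⟨U, V, hU, hV, hM, -⟩ := exists_svd M
  obtain ⟨T, hT, hle⟩ := exists_card_eq_sum_abs_diag_le hU hV (singVals M) S
  rw [← hM] at hle
  calc ∑ i ∈ S, |M i i| ≤ ∑ j ∈ T, singVals M j :=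
        hle.trans_eq (sum_congr rfl fun j _ => abs_of_nonneg (Real.sqrt_nonneg _))
    _ ≤ sumTopSingVals M S.card := hT ▸ le_sumTopSingVals M T

theorem exists_card_eq_sum_singVals_diagonal_le {n : ℕ} (d : Fin n → ℝ) (s : Finset (Fin n)) :
    ∃ T : Finset (Fin n), T.card = s.card ∧
      ∑ j ∈ s, singVals (diagonal d) j ≤ ∑ i ∈ T, |d i| := by
  obtain ⟨U, V, hU, hV, -, hD⟩ := exists_svd (diagonal d)
  obtain ⟨T, hT, hle⟩ := exists_card_eq_sum_abs_diag_le hU.transpose hV.transpose d s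
  rw [transpose_transpose, hD] at hle
  refine ⟨T, hT, (sum_le_sum fun j _ => ?_).trans hle⟩
  simpa using le_abs_self (singVals (diagonal d) j)

theorem stmt_3_general {n : ℕ} (M : Matrix (Fin n) (Fin n) ℝ) (k : ℕ) (hkn : k ≤ n) :
    sumTopSingVals (Matrix.diagonal (fun i => M i i)) k ≤ sumTopSingVals M k := by
  apply csSup_le
  · obtain ⟨s, -, hs⟩ := exists_subset_card_eq (s := (univ : Finset (Fin n))) (by simpa using hkn)
    exact ⟨_, s, hs, rfl⟩
  · rintro _ ⟨s, rfl, rfl⟩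
    obtain ⟨T, hT, hle⟩ := exists_card_eq_sum_singVals_diagonal_le (fun i => M i i) s
    exact hle.trans (hT ▸ sum_abs_diag_le_sumTopSingVals M T)

/-- Ky Fan inequality applied to diagonal extraction: for any `n×n` matrix `M` and any
`1 ≤ k ≤ n`, the sum of the `k` largest singular values of the diagonal part `M_d`
is at most the sum of the `k` largest singular values of `M`. -/
theorem stmt_3 {n : ℕ} (M : Matrix (Fin n) (Fin n) ℝ) (k : ℕ) (hk1 : 1 ≤ k) (hkn : k ≤ n) :
    sumTopSingVals (Matrix.diagonal (fun i => M i i)) k ≤ sumTopSingVals M k :=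
  stmt_3_general M k hkn
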